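/- arXiv:2512.19664 — 6 statements merged into one kernel-verified Lean document; each statement's English description precedes it below -/
import Mathlib

section
/- Let K be a field and q ∈ K* an element that is not a root of unity. If g, h ∈ K[y] are polynomials satisfying g(y)·h(qy) = h(y)·g(qy), then g and h are proportional: there is c ∈ K with g = c·h or h = c·g. -/
open Polynomial

theorem stmt_4 (K : Type*) [Field K] (q : K) (hq : q ≠ 0)
    (hroot : ∀ n : ℕ, 0 < n → q ^ n ≠ 1)
    (g h : K[X])
    (hgh : g * h.comp (C q * X) = h * g.comp (C q * X)) :
    ∃ c : K, g = C c * h ∨ h = C c * g := by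
  rcases eq_or_ne g 0 with rfl | hg0
  · exact ⟨0, Or.inl (by simp)⟩
  rcases eq_or_ne h 0 with rfl | hh0
  · exact ⟨0, Or.inr (by simp)⟩
  have hpowinj : ∀ m n : ℕ, q ^ m = q ^ n → m = n := by
    intro m n hmn
    rcases Nat.lt_trichotomy m n with hlt | heq | hlt
    · exfalso
      apply hroot (n - m) (by omega)
      have h1 : q ^ m * q ^ (n - m) = q ^ m * 1 := by
        rw [mul_one, ← pow_add]
        rw [hmn]; congr 1; omega
      exact mul_left_cancel₀ (pow_ne_zero m hq) h1
    · exact heq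
    · exfalso
      apply hroot (m - n) (by omega)
      have h1 : q ^ n * q ^ (m - n) = q ^ n * 1 := by
        rw [mul_one, ← pow_add]
        rw [← hmn]; congr 1; omega
      exact mul_left_cancel₀ (pow_ne_zero n hq) h1
  have hqX : (C q * X : K[X]).natDegree = 1 := by
    rw [natDegree_C_mul hq, natDegree_X]
  have hqXne : (C q * X : K[X]).natDegree ≠ 0 := by rw [hqX]; exact one_ne_zero
  have hlcX : (C q * X : K[X]).leadingCoeff = q := by
    rw [leadingCoeff_mul, leadingCoeff_C, leadingCoeff_X, mul_one]
  have key : ∀ a b : K[X], a ≠ 0 → b ≠ 0 →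
      a * b.comp (C q * X) = b * a.comp (C q * X) → a.natDegree = b.natDegree := by
    intro a b ha hb hab
    have h1 := congrArg leadingCoeff hab
    rw [leadingCoeff_mul, leadingCoeff_mul, leadingCoeff_comp hqXne,
      leadingCoeff_comp hqXne, hlcX] at h1
    have h2 : q ^ b.natDegree = q ^ a.natDegree := by
      have hla : a.leadingCoeff ≠ 0 := leadingCoeff_ne_zero.mpr ha
      have hlb : b.leadingCoeff ≠ 0 := leadingCoeff_ne_zero.mpr hb
      have h3 : a.leadingCoeff * b.leadingCoeff * q ^ b.natDegree
          = a.leadingCoeff * b.leadingCoeff * q ^ a.natDegree := by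
        ring_nf
        ring_nf at h1
        linear_combination h1
      exact mul_left_cancel₀ (mul_ne_zero hla hlb) h3
    exact (hpowinj _ _ h2).symm
  have hdeg := key g h hg0 hh0 hgh
  set c := g.leadingCoeff / h.leadingCoeff with hc
  have hlg : g.leadingCoeff ≠ 0 := leadingCoeff_ne_zero.mpr hg0
  have hlh : h.leadingCoeff ≠ 0 := leadingCoeff_ne_zero.mpr hh0
  have hcne : c ≠ 0 := div_ne_zero hlg hlh
  refine ⟨c, Or.inl ?_⟩
  by_contra hne
  set f := g - C c * h with hf
  have hf0 : f ≠ 0 := sub_ne_zero.mpr hne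
  have hfh : f * h.comp (C q * X) = h * f.comp (C q * X) := by
    rw [hf, sub_comp, mul_comp, C_comp]
    ring_nf
    ring_nf at hgh
    linear_combination hgh
  have hdf := key f h hf0 hh0 hfh
  have hdegeq : g.degree = (C c * h).degree := by
    rw [degree_C_mul hcne, degree_eq_natDegree hg0, degree_eq_natDegree hh0, hdeg]
  have hlceq : g.leadingCoeff = (C c * h).leadingCoeff := by
    rw [leadingCoeff_mul, leadingCoeff_C, hc, div_mul_cancel₀ _ hlh]
  have hlt : f.degree < g.degree := degree_sub_lt hdegeq hg0 hlceq
  have hltn : f.natDegree < g.natDegree := natDegree_lt_natDegree hf0 hlt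
  omega
end

section
/- Let R be a K-algebra, q ∈ K*, and suppose (a11, a12, a22) and (b11, b12, b22) are two triples in R each satisfying the relations x22·x12 = q·x12·x22, x11·x12 = q·x12·x11, x11·x22 = x22·x11, and suppose every a_{ij} commutes with every b_{kl}. Then the triple (c11, c12, c22) := (a11·b11, a11·b12 + a12·b22, a22·b22) also satisfies the same three relations. -/
theorem stmt_10 (K : Type*) [Field K] (R : Type*) [Ring R] [Algebra K R]
    (q : K) (hq : q ≠ 0) (a11 a12 a22 b11 b12 b22 : R)
    (ha1 : a22 * a12 = q • (a12 * a22))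
    (ha2 : a11 * a12 = q • (a12 * a11))
    (ha3 : a11 * a22 = a22 * a11)
    (hb1 : b22 * b12 = q • (b12 * b22))
    (hb2 : b11 * b12 = q • (b12 * b11))
    (hb3 : b11 * b22 = b22 * b11)
    (hcomm : ∀ x ∈ ({a11, a12, a22} : Set R), ∀ y ∈ ({b11, b12, b22} : Set R),
      x * y = y * x) :
    (a22 * b22) * (a11 * b12 + a12 * b22) = q • ((a11 * b12 + a12 * b22) * (a22 * b22)) ∧
    (a11 * b11) * (a11 * b12 + a12 * b22) = q • ((a11 * b12 + a12 * b22) * (a11 * b11)) ∧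
    (a11 * b11) * (a22 * b22) = (a22 * b22) * (a11 * b11) := by
  have c11_11 : a11 * b11 = b11 * a11 := hcomm a11 (by simp) b11 (by simp)
  have c11_12 : a11 * b12 = b12 * a11 := hcomm a11 (by simp) b12 (by simp)
  have c11_22 : a11 * b22 = b22 * a11 := hcomm a11 (by simp) b22 (by simp)
  have c12_11 : a12 * b11 = b11 * a12 := hcomm a12 (by simp) b11 (by simp)
  have c12_12 : a12 * b12 = b12 * a12 := hcomm a12 (by simp) b12 (by simp)
  have c12_22 : a12 * b22 = b22 * a12 := hcomm a12 (by simp) b22 (by simp)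
  have c22_11 : a22 * b11 = b11 * a22 := hcomm a22 (by simp) b11 (by simp)
  have c22_12 : a22 * b12 = b12 * a22 := hcomm a22 (by simp) b12 (by simp)
  have c22_22 : a22 * b22 = b22 * a22 := hcomm a22 (by simp) b22 (by simp)
  refine ⟨?_, ?_, ?_⟩
  · calc a22 * b22 * (a11 * b12 + a12 * b22)
        = (a22 * a11) * (b22 * b12) + (a22 * a12) * (b22 * b22) := by
          rw [mul_add]
          congr 1
          · calc a22 * b22 * (a11 * b12) = a22 * (b22 * a11) * b12 := by simp only [mul_assoc]
            _ = a22 * (a11 * b22) * b12 := by rw [c11_22]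
            _ = (a22 * a11) * (b22 * b12) := by simp only [mul_assoc]
          · calc a22 * b22 * (a12 * b22) = a22 * (b22 * a12) * b22 := by simp only [mul_assoc]
            _ = a22 * (a12 * b22) * b22 := by rw [c12_22]
            _ = (a22 * a12) * (b22 * b22) := by simp only [mul_assoc]
    _ = (a11 * a22) * (q • (b12 * b22)) + (q • (a12 * a22)) * (b22 * b22) := by
          rw [← ha3, ← hb1, ← ha1]
    _ = q • ((a11 * b12) * (a22 * b22)) + q • ((a12 * b22) * (a22 * b22)) := by
          rw [mul_smul_comm, smul_mul_assoc]
          congr 2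
          · calc a11 * a22 * (b12 * b22) = a11 * (a22 * b12) * b22 := by simp only [mul_assoc]
            _ = a11 * (b12 * a22) * b22 := by rw [c22_12]
            _ = a11 * b12 * (a22 * b22) := by simp only [mul_assoc]
          · calc a12 * a22 * (b22 * b22) = a12 * (a22 * b22) * b22 := by simp only [mul_assoc]
            _ = a12 * (b22 * a22) * b22 := by rw [c22_22]
            _ = a12 * b22 * (a22 * b22) := by simp only [mul_assoc]
    _ = q • ((a11 * b12 + a12 * b22) * (a22 * b22)) := by
          rw [add_mul, smul_add]
  · calc a11 * b11 * (a11 * b12 + a12 * b22)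
        = (a11 * a11) * (b11 * b12) + (a11 * a12) * (b11 * b22) := by
          rw [mul_add]
          congr 1
          · calc a11 * b11 * (a11 * b12) = a11 * (b11 * a11) * b12 := by simp only [mul_assoc]
            _ = a11 * (a11 * b11) * b12 := by rw [c11_11]
            _ = (a11 * a11) * (b11 * b12) := by simp only [mul_assoc]
          · calc a11 * b11 * (a12 * b22) = a11 * (b11 * a12) * b22 := by simp only [mul_assoc]
            _ = a11 * (a12 * b11) * b22 := by rw [c12_11]
            _ = (a11 * a12) * (b11 * b22) := by simp only [mul_assoc]
    _ = (a11 * a11) * (q • (b12 * b11)) + (q • (a12 * a11)) * (b22 * b11) := by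
          rw [← hb2, ← ha2, ← hb3]
    _ = q • ((a11 * b12) * (a11 * b11)) + q • ((a12 * b22) * (a11 * b11)) := by
          rw [mul_smul_comm, smul_mul_assoc]
          congr 2
          · calc a11 * a11 * (b12 * b11) = a11 * (a11 * b12) * b11 := by simp only [mul_assoc]
            _ = a11 * (b12 * a11) * b11 := by rw [c11_12]
            _ = a11 * b12 * (a11 * b11) := by simp only [mul_assoc]
          · calc a12 * a11 * (b22 * b11) = a12 * (a11 * b22) * b11 := by simp only [mul_assoc]
            _ = a12 * (b22 * a11) * b11 := by rw [c11_22]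
            _ = a12 * b22 * (a11 * b11) := by simp only [mul_assoc]
    _ = q • ((a11 * b12 + a12 * b22) * (a11 * b11)) := by
          rw [add_mul, smul_add]
  · calc a11 * b11 * (a22 * b22) = a11 * (b11 * a22) * b22 := by simp only [mul_assoc]
    _ = a11 * (a22 * b11) * b22 := by rw [c22_11]
    _ = (a11 * a22) * (b11 * b22) := by simp only [mul_assoc]
    _ = (a22 * a11) * (b22 * b11) := by rw [ha3, hb3]
    _ = a22 * (a11 * b22) * b11 := by simp only [mul_assoc]
    _ = a22 * (b22 * a11) * b11 := by rw [c11_22]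
    _ = a22 * b22 * (a11 * b11) := by simp only [mul_assoc]
end

section
/- Let T = T_q(2) be as above with q ∈ K* not a root of unity, and let ν = (ν11, ν12, ν22) ∈ ℕ³. The map sending a12 ↦ a11^{ν11}·a12^{ν12}·a22^{ν22} and a11, a22 ↦ 0 extends to a K-linear derivation of T if and only if ν12 = 1. -/
/-- The defining relations of `T_q(2)`: generator `0` is `a11`, `1` is `a12`, `2` is `a22`. -/
inductive Tq2Rel (K : Type*) [Field K] (q : K) :
    FreeAlgebra K (Fin 3) → FreeAlgebra K (Fin 3) → Prop
  | r1 : Tq2Rel K q (FreeAlgebra.ι K 2 * FreeAlgebra.ι K 1)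
      (q • (FreeAlgebra.ι K 1 * FreeAlgebra.ι K 2))
  | r2 : Tq2Rel K q (FreeAlgebra.ι K 0 * FreeAlgebra.ι K 1)
      (q • (FreeAlgebra.ι K 1 * FreeAlgebra.ι K 0))
  | r3 : Tq2Rel K q (FreeAlgebra.ι K 0 * FreeAlgebra.ι K 2)
      (FreeAlgebra.ι K 2 * FreeAlgebra.ι K 0)

/-- The quantum upper triangular matrix algebra `T_q(2)`. -/
abbrev Tq2 (K : Type*) [Field K] (q : K) := RingQuot (Tq2Rel K q)

/-- The generators `a11`, `a12`, `a22` of `T_q(2)` (indexed by `0`, `1`, `2`). -/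
def Tq2.a (K : Type*) [Field K] (q : K) (i : Fin 3) : Tq2 K q :=
  RingQuot.mkAlgHom K (Tq2Rel K q) (FreeAlgebra.ι K i)

set_option maxHeartbeats 1000000

namespace Stmt13Aux

variable (K : Type*) [Field K] (q : K)

local notation "a" => Tq2.a K q

lemma c20 : a 2 * a 0 = a 0 * a 2 := by
  have := RingQuot.mkAlgHom_rel K (Tq2Rel.r3 (K := K) (q := q))
  simpa [Tq2.a, map_mul] using this.symm

lemma c21 : a 2 * a 1 = q • (a 1 * a 2) := by
  have := RingQuot.mkAlgHom_rel K (Tq2Rel.r1 (K := K) (q := q))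
  simpa [Tq2.a, map_mul, map_smul] using this

lemma c01 : a 0 * a 1 = q • (a 1 * a 0) := by
  have := RingQuot.mkAlgHom_rel K (Tq2Rel.r2 (K := K) (q := q))
  simpa [Tq2.a, map_mul, map_smul] using this

lemma c2pow1 (n : ℕ) : a 2 * a 1 ^ n = q ^ n • (a 1 ^ n * a 2) := by
  induction n with
  | zero => simp
  | succ n ih =>
    rw [pow_succ, ← mul_assoc, ih, smul_mul_assoc, mul_assoc, c21, mul_smul_comm,
      smul_smul, mul_assoc, pow_succ]

lemma c0pow1 (n : ℕ) : a 0 * a 1 ^ n = q ^ n • (a 1 ^ n * a 0) := by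
  induction n with
  | zero => simp
  | succ n ih =>
    rw [pow_succ, ← mul_assoc, ih, smul_mul_assoc, mul_assoc, c01, mul_smul_comm,
      smul_smul, mul_assoc, pow_succ]

lemma commM2 (i j k : ℕ) :
    a 2 * (a 0 ^ i * a 1 ^ j * a 2 ^ k) = q ^ j • (a 0 ^ i * a 1 ^ j * a 2 ^ k * a 2) := by
  have h : Commute (a 2) (a 0) := c20 K q
  have h2i : a 2 * a 0 ^ i = a 0 ^ i * a 2 := (h.pow_right i).eq
  have h2k : a 2 * a 2 ^ k = a 2 ^ k * a 2 := (Commute.refl (a 2)).pow_right k |>.eq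
  simp only [mul_assoc]
  rw [← mul_assoc (a 2), h2i, mul_assoc]
  rw [← mul_assoc (a 2), c2pow1, smul_mul_assoc, mul_assoc, h2k, mul_smul_comm]

lemma commM0 (i j k : ℕ) :
    a 0 * (a 0 ^ i * a 1 ^ j * a 2 ^ k) = q ^ j • (a 0 ^ i * a 1 ^ j * a 2 ^ k * a 0) := by
  have h : Commute (a 0) (a 2) := (c20 K q).symm
  have h0k : a 0 * a 2 ^ k = a 2 ^ k * a 0 := (h.pow_right k).eq
  have h0i : a 0 * a 0 ^ i = a 0 ^ i * a 0 := (Commute.refl (a 0)).pow_right i |>.eq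
  simp only [mul_assoc]
  rw [← mul_assoc (a 0), h0i, mul_assoc]
  rw [← mul_assoc (a 0), c0pow1, smul_mul_assoc, mul_assoc, h0k, mul_smul_comm]

end Stmt13Aux

set_option maxHeartbeats 1000000

namespace Stmt13Aux2

variable (K : Type*) [Field K] (q : K)

local notation "a" => Tq2.a K q
open Polynomial TrivSqZeroExt Stmt13Aux

noncomputable def S : Module.End K (Polynomial K) :=
  (Polynomial.aeval (q • Polynomial.X : Polynomial K)).toLinearMap

noncomputable def Xm : Module.End K (Polynomial K) := LinearMap.mulLeft K Polynomial.X

lemma S_apply (p : Polynomial K) : S K q p = Polynomial.aeval (q • Polynomial.X : Polynomial K) p := rfl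

lemma S_one : S K q 1 = 1 := by rw [S_apply, map_one]

lemma S_Xpow (m : ℕ) : S K q (Polynomial.X ^ m) = q ^ m • Polynomial.X ^ m := by
  rw [S_apply, map_pow, Polynomial.aeval_X, _root_.smul_pow]

lemma S_mul_X (p : Polynomial K) : S K q (Polynomial.X * p) = q • (Polynomial.X * S K q p) := by
  rw [S_apply, map_mul, Polynomial.aeval_X, S_apply, smul_mul_assoc]

lemma SX : S K q * Xm K = q • (Xm K * S K q) := by
  refine LinearMap.ext fun p => ?_
  rw [Module.End.mul_apply, LinearMap.smul_apply, Module.End.mul_apply]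
  rw [Xm, LinearMap.mulLeft_apply, LinearMap.mulLeft_apply, S_mul_X]

noncomputable def ψ : Tq2 K q →ₐ[K] Module.End K (Polynomial K) :=
  RingQuot.liftAlgHom K ⟨FreeAlgebra.lift K ![S K q, Xm K, S K q], by
    rintro _ _ ⟨⟩ <;>
      simp only [map_mul, map_smul, FreeAlgebra.lift_ι_apply, Matrix.cons_val_zero,
        Matrix.cons_val_one, Matrix.head_cons, Matrix.cons_val_two, Matrix.tail_cons]
    · exact SX K q
    · exact SX K q⟩

lemma ψa (i : Fin 3) : ψ K q (a i) = ![S K q, Xm K, S K q] i := by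
  rw [Tq2.a, ψ, RingQuot.liftAlgHom_mkAlgHom_apply, FreeAlgebra.lift_ι_apply]

lemma Spow_one (k : ℕ) : (S K q ^ k) 1 = 1 := by
  induction k with
  | zero => simp
  | succ k ih => rw [pow_succ', Module.End.mul_apply, ih, S_one]

lemma Spow_Xpow (k m : ℕ) : (S K q ^ k) (Polynomial.X ^ m) = ((q ^ m) ^ k) • Polynomial.X ^ m := by
  induction k with
  | zero => simp
  | succ k ih =>
    rw [pow_succ', Module.End.mul_apply, ih, map_smul, S_Xpow, smul_smul, ← pow_succ]

lemma Xm_pow (j : ℕ) : (Xm K ^ j) 1 = Polynomial.X ^ j := by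
  induction j with
  | zero => simp
  | succ j ih =>
    rw [pow_succ', Module.End.mul_apply, ih, Xm, LinearMap.mulLeft_apply, ← pow_succ']

lemma eval_main (i j k : ℕ) :
    (ψ K q (a 0 ^ i * a 1 ^ j * a 2 ^ k * a 2)) 1 = ((q ^ j) ^ i) • Polynomial.X ^ j := by
  rw [map_mul, map_mul, map_mul, map_pow, map_pow, map_pow]
  rw [ψa, ψa, ψa]
  rw [show (![S K q, Xm K, S K q] 0) = S K q from rfl,
    show (![S K q, Xm K, S K q] 1) = Xm K from rfl,
    show (![S K q, Xm K, S K q] 2) = S K q from rfl]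
  rw [Module.End.mul_apply, Module.End.mul_apply, Module.End.mul_apply, S_one, Spow_one,
    Xm_pow, Spow_Xpow]

lemma pow_inj (hq : q ≠ 0) (hroot : ∀ n : ℕ, 0 < n → q ^ n ≠ 1) {m : ℕ}
    (h : q ^ m = q) : m = 1 := by
  rcases lt_trichotomy m 1 with hm | hm | hm
  · interval_cases m
    exact absurd h.symm (by simpa using hroot 1 one_pos)
  · exact hm
  · have hm1 : 0 < m - 1 := by omega
    have hm2 : m - 1 + 1 = m := by omega
    have h1 : q ^ (m - 1) * q = q := by rw [← pow_succ, hm2, h]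
    have := mul_right_cancel₀ hq (h1.trans (one_mul q).symm)
    exact absurd this (hroot (m - 1) hm1)

end Stmt13Aux2

namespace Stmt13Aux3

variable (K : Type*) [Field K] (q : K) (i k : ℕ)

open TrivSqZeroExt Stmt13Aux

local notation "a" => Tq2.a K q

noncomputable def m : Tq2 K q := a 0 ^ i * a 1 ^ 1 * a 2 ^ k

noncomputable def g1 : TrivSqZeroExt (Tq2 K q) (Tq2 K q) :=
  TrivSqZeroExt.inl (a 1) + TrivSqZeroExt.inr (m K q i k)

lemma rel1 : (TrivSqZeroExt.inl (a 2) : TrivSqZeroExt (Tq2 K q) (Tq2 K q)) * g1 K q i k =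
    q • (g1 K q i k * TrivSqZeroExt.inl (a 2)) := by
  refine TrivSqZeroExt.ext ?_ ?_
  · simp only [g1, fst_mul, fst_smul, fst_inl, fst_add, fst_inr, add_zero]
    exact c21 K q
  · simp only [g1, snd_mul, snd_smul, snd_inl, snd_add, snd_inr, fst_add, fst_inl, fst_inr,
      add_zero, zero_add, smul_zero, smul_eq_mul, MulOpposite.smul_eq_mul_unop,
      MulOpposite.unop_op]
    simpa [m, pow_one] using commM2 K q i 1 k

lemma rel2 : (TrivSqZeroExt.inl (a 0) : TrivSqZeroExt (Tq2 K q) (Tq2 K q)) * g1 K q i k =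
    q • (g1 K q i k * TrivSqZeroExt.inl (a 0)) := by
  refine TrivSqZeroExt.ext ?_ ?_
  · simp only [g1, fst_mul, fst_smul, fst_inl, fst_add, fst_inr, add_zero]
    exact c01 K q
  · simp only [g1, snd_mul, snd_smul, snd_inl, snd_add, snd_inr, fst_add, fst_inl, fst_inr,
      add_zero, zero_add, smul_zero, smul_eq_mul, MulOpposite.smul_eq_mul_unop,
      MulOpposite.unop_op]
    simpa [m, pow_one] using commM0 K q i 1 k

lemma rel3 : (TrivSqZeroExt.inl (a 0) : TrivSqZeroExt (Tq2 K q) (Tq2 K q)) * TrivSqZeroExt.inl (a 2) =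
    (TrivSqZeroExt.inl (a 2) : TrivSqZeroExt (Tq2 K q) (Tq2 K q)) * TrivSqZeroExt.inl (a 0) := by
  rw [inl_mul_inl, inl_mul_inl, c20]

noncomputable def φ : Tq2 K q →ₐ[K] TrivSqZeroExt (Tq2 K q) (Tq2 K q) :=
  RingQuot.liftAlgHom K ⟨FreeAlgebra.lift K
    ![TrivSqZeroExt.inl (a 0), g1 K q i k, TrivSqZeroExt.inl (a 2)], by
    rintro _ _ ⟨⟩ <;>
      simp only [map_mul, map_smul, FreeAlgebra.lift_ι_apply, Matrix.cons_val_zero,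
        Matrix.cons_val_one, Matrix.head_cons, Matrix.cons_val_two, Matrix.tail_cons]
    · exact rel1 K q i k
    · exact rel2 K q i k
    · exact rel3 K q⟩

lemma φa (j : Fin 3) : φ K q i k (a j) =
    ![TrivSqZeroExt.inl (a 0), g1 K q i k, TrivSqZeroExt.inl (a 2)] j := by
  rw [Tq2.a, φ, RingQuot.liftAlgHom_mkAlgHom_apply, FreeAlgebra.lift_ι_apply]

lemma φ_fst (x : Tq2 K q) : (φ K q i k x).fst = x := by
  have h : (TrivSqZeroExt.fstHom K (Tq2 K q) (Tq2 K q)).comp (φ K q i k)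
      = AlgHom.id K (Tq2 K q) := by
    refine RingQuot.ringQuot_ext' K _ _ ?_
    refine FreeAlgebra.hom_ext ?_
    funext j
    show (TrivSqZeroExt.fstHom K (Tq2 K q) (Tq2 K q)) (φ K q i k (a j)) = a j
    rw [φa]
    fin_cases j
    · simp [fstHom_apply]
    · simp [fstHom_apply, g1]
    · simp [fstHom_apply]
  calc (φ K q i k x).fst = ((TrivSqZeroExt.fstHom K (Tq2 K q) (Tq2 K q)).comp (φ K q i k)) x := rfl
  _ = x := by rw [h]; rfl

noncomputable def Dmap : Tq2 K q →ₗ[K] Tq2 K q where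
  toFun x := (φ K q i k x).snd
  map_add' x y := by show (φ K q i k (x + y)).snd = _; rw [map_add, snd_add]
  map_smul' c x := by show (φ K q i k (c • x)).snd = _; rw [map_smul, snd_smul]; rfl

lemma Dmap_leibniz (x y : Tq2 K q) :
    Dmap K q i k (x * y) = Dmap K q i k x * y + x * Dmap K q i k y := by
  show (φ K q i k (x * y)).snd = (φ K q i k x).snd * y + x * (φ K q i k y).snd
  rw [map_mul, snd_mul, φ_fst, φ_fst, smul_eq_mul, MulOpposite.smul_eq_mul_unop,
    MulOpposite.unop_op, add_comm]

lemma Dmap_a0 : Dmap K q i k (a 0) = 0 := by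
  show (φ K q i k (a 0)).snd = 0
  rw [φa]
  simp

lemma Dmap_a2 : Dmap K q i k (a 2) = 0 := by
  show (φ K q i k (a 2)).snd = 0
  rw [φa]
  simp

lemma Dmap_a1 : Dmap K q i k (a 1) = a 0 ^ i * a 1 ^ 1 * a 2 ^ k := by
  show (φ K q i k (a 1)).snd = _
  rw [φa]
  simp [g1, m]

end Stmt13Aux3

theorem stmt_13 (K : Type*) [Field K] (q : K) (hq : q ≠ 0)
    (hroot : ∀ n : ℕ, 0 < n → q ^ n ≠ 1) (ν11 ν12 ν22 : ℕ) :
    (∃ D : Tq2 K q →ₗ[K] Tq2 K q,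
        (∀ x y : Tq2 K q, D (x * y) = D x * y + x * D y) ∧
        D (Tq2.a K q 0) = 0 ∧ D (Tq2.a K q 2) = 0 ∧
        D (Tq2.a K q 1) = Tq2.a K q 0 ^ ν11 * Tq2.a K q 1 ^ ν12 * Tq2.a K q 2 ^ ν22) ↔
      ν12 = 1 := by
  constructor
  · rintro ⟨D, hD, h0, h2, h1⟩
    have e1 : Tq2.a K q 2 * (Tq2.a K q 0 ^ ν11 * Tq2.a K q 1 ^ ν12 * Tq2.a K q 2 ^ ν22)
        = q • (Tq2.a K q 0 ^ ν11 * Tq2.a K q 1 ^ ν12 * Tq2.a K q 2 ^ ν22 * Tq2.a K q 2) := by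
      have hL : D (Tq2.a K q 2 * Tq2.a K q 1)
          = Tq2.a K q 2 * (Tq2.a K q 0 ^ ν11 * Tq2.a K q 1 ^ ν12 * Tq2.a K q 2 ^ ν22) := by
        rw [hD, h2, h1, zero_mul, zero_add]
      have hR : D (q • (Tq2.a K q 1 * Tq2.a K q 2))
          = q • (Tq2.a K q 0 ^ ν11 * Tq2.a K q 1 ^ ν12 * Tq2.a K q 2 ^ ν22 * Tq2.a K q 2) := by
        rw [map_smul, hD, h1, h2, mul_zero, add_zero]
      rw [← hL, ← hR, Stmt13Aux.c21 K q]
    have e2 := Stmt13Aux.commM2 K q ν11 ν12 ν22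
    have e3 : q ^ ν12 • (Tq2.a K q 0 ^ ν11 * Tq2.a K q 1 ^ ν12 * Tq2.a K q 2 ^ ν22 * Tq2.a K q 2)
        = q • (Tq2.a K q 0 ^ ν11 * Tq2.a K q 1 ^ ν12 * Tq2.a K q 2 ^ ν22 * Tq2.a K q 2) := by
      rw [← e2, e1]
    have e4 := congrArg (fun z => Stmt13Aux2.ψ K q z 1) e3
    simp only [map_smul, LinearMap.smul_apply] at e4
    rw [Stmt13Aux2.eval_main, smul_smul, smul_smul] at e4
    have hXne : (Polynomial.X : Polynomial K) ^ ν12 ≠ 0 :=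
      pow_ne_zero _ Polynomial.X_ne_zero
    have h6 : (q ^ ν12 * (q ^ ν12) ^ ν11 - q * (q ^ ν12) ^ ν11)
        • ((Polynomial.X : Polynomial K) ^ ν12) = 0 := by
      rw [sub_smul, e4, sub_self]
    have e5 : q ^ ν12 * (q ^ ν12) ^ ν11 = q * (q ^ ν12) ^ ν11 := by
      rcases smul_eq_zero.mp h6 with h | h
      · exact sub_eq_zero.mp h
      · exact absurd h hXne
    have hc : (q ^ ν12) ^ ν11 ≠ 0 := pow_ne_zero _ (pow_ne_zero _ hq)
    exact Stmt13Aux2.pow_inj K q hq hroot (mul_right_cancel₀ hc e5)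
  · rintro rfl
    exact ⟨Stmt13Aux3.Dmap K q ν11 ν22, Stmt13Aux3.Dmap_leibniz K q ν11 ν22,
      Stmt13Aux3.Dmap_a0 K q ν11 ν22, Stmt13Aux3.Dmap_a2 K q ν11 ν22,
      Stmt13Aux3.Dmap_a1 K q ν11 ν22⟩
end

section
/- Let T = T_q(2) be as above with q ∈ K* not a root of unity. The map sending a11 ↦ a22 and a12, a22 ↦ 0 extends to a derivation of T, and the map sending a22 ↦ a11 and a11, a12 ↦ 0 extends to a derivation of T. -/
section helper
variable (K : Type*) [Field K] (q : K)

lemma Tq2.rel1 : Tq2.a K q 2 * Tq2.a K q 1 = q • (Tq2.a K q 1 * Tq2.a K q 2) := by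
  have := RingQuot.mkAlgHom_rel K (Tq2Rel.r1 (K := K) (q := q))
  simpa [Tq2.a, map_mul, map_smul] using this

lemma Tq2.rel2 : Tq2.a K q 0 * Tq2.a K q 1 = q • (Tq2.a K q 1 * Tq2.a K q 0) := by
  have := RingQuot.mkAlgHom_rel K (Tq2Rel.r2 (K := K) (q := q))
  simpa [Tq2.a, map_mul, map_smul] using this

lemma Tq2.rel3 : Tq2.a K q 0 * Tq2.a K q 2 = Tq2.a K q 2 * Tq2.a K q 0 := by
  have := RingQuot.mkAlgHom_rel K (Tq2Rel.r3 (K := K) (q := q))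
  simpa [Tq2.a, map_mul] using this

noncomputable def Tq2.phi (d : Fin 3 → Tq2 K q) :
    FreeAlgebra K (Fin 3) →ₐ[K] TrivSqZeroExt (Tq2 K q) (Tq2 K q) :=
  FreeAlgebra.lift K fun i => TrivSqZeroExt.inl (Tq2.a K q i) + TrivSqZeroExt.inr (d i)

lemma Tq2.phi_ι (d : Fin 3 → Tq2 K q) (i : Fin 3) :
    Tq2.phi K q d (FreeAlgebra.ι K i)
      = TrivSqZeroExt.inl (Tq2.a K q i) + TrivSqZeroExt.inr (d i) := by
  simp [Tq2.phi]

/-- Given a compatible assignment `d` on generators, build the derivation. -/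
theorem Tq2.exists_deriv (d : Fin 3 → Tq2 K q)
    (hrel : ∀ ⦃x y⦄, Tq2Rel K q x y → Tq2.phi K q d x = Tq2.phi K q d y) :
    ∃ D : Tq2 K q →ₗ[K] Tq2 K q,
      (∀ x y : Tq2 K q, D (x * y) = D x * y + x * D y) ∧
      ∀ i, D (Tq2.a K q i) = d i := by
  set ψ : Tq2 K q →ₐ[K] TrivSqZeroExt (Tq2 K q) (Tq2 K q) :=
    RingQuot.liftAlgHom K ⟨Tq2.phi K q d, hrel⟩ with hψ
  have hψa : ∀ i, ψ (Tq2.a K q i)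
      = TrivSqZeroExt.inl (Tq2.a K q i) + TrivSqZeroExt.inr (d i) := by
    intro i
    rw [hψ, Tq2.a, RingQuot.liftAlgHom_mkAlgHom_apply, Tq2.phi_ι]
    rfl
  have hfst : ∀ x : Tq2 K q, (ψ x).fst = x := by
    have : (TrivSqZeroExt.fstHom K (Tq2 K q) (Tq2 K q)).comp ψ = AlgHom.id K (Tq2 K q) := by
      apply RingQuot.ringQuot_ext'
      apply FreeAlgebra.hom_ext
      funext i
      simp only [AlgHom.comp_apply, Function.comp_apply, AlgHom.id_apply]
      rw [show (RingQuot.mkAlgHom K (Tq2Rel K q)) (FreeAlgebra.ι K i) = Tq2.a K q i from rfl,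
        hψa i]
      simp
    intro x
    exact congrArg (fun F => F x) (congrArg AlgHom.toLinearMap this) |>.trans rfl
  refine ⟨{ toFun := fun x => (ψ x).snd,
            map_add' := by
              intro x y
              show (ψ (x + y)).snd = (ψ x).snd + (ψ y).snd
              rw [map_add, TrivSqZeroExt.snd_add],
            map_smul' := by
              intro c x
              show (ψ (c • x)).snd = c • (ψ x).snd
              rw [map_smul, TrivSqZeroExt.snd_smul] }, ?_, ?_⟩
  · intro x y
    show (ψ (x * y)).snd = (ψ x).snd * y + x * (ψ y).snd
    rw [map_mul, TrivSqZeroExt.snd_mul, hfst, hfst, smul_eq_mul, op_smul_eq_mul, add_comm]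
  · intro i
    show (ψ (Tq2.a K q i)).snd = d i
    rw [hψa i, TrivSqZeroExt.snd_add, TrivSqZeroExt.snd_inl, TrivSqZeroExt.snd_inr, zero_add]

end helper

theorem stmt_14 (K : Type*) [Field K] (q : K) (hq : q ≠ 0)
    (hroot : ∀ n : ℕ, 0 < n → q ^ n ≠ 1) :
    (∃ D : Tq2 K q →ₗ[K] Tq2 K q,
        (∀ x y : Tq2 K q, D (x * y) = D x * y + x * D y) ∧
        D (Tq2.a K q 0) = Tq2.a K q 2 ∧ D (Tq2.a K q 1) = 0 ∧ D (Tq2.a K q 2) = 0) ∧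
    (∃ D : Tq2 K q →ₗ[K] Tq2 K q,
        (∀ x y : Tq2 K q, D (x * y) = D x * y + x * D y) ∧
        D (Tq2.a K q 2) = Tq2.a K q 0 ∧ D (Tq2.a K q 0) = 0 ∧ D (Tq2.a K q 1) = 0) := by
  constructor
  · have hrel : ∀ ⦃x y⦄, Tq2Rel K q x y →
        Tq2.phi K q ![Tq2.a K q 2, 0, 0] x = Tq2.phi K q ![Tq2.a K q 2, 0, 0] y := by
      intro x y h
      induction h with
      | r1 =>
        ext
        · simp [Tq2.phi_ι, Tq2.rel1]
        · simp [Tq2.phi_ι, smul_eq_mul, MulOpposite.smul_eq_mul_unop]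
      | r2 =>
        ext
        · simp [Tq2.phi_ι, Tq2.rel2]
        · simp [Tq2.phi_ι, smul_eq_mul, MulOpposite.smul_eq_mul_unop, Tq2.rel1]
      | r3 =>
        ext
        · simp [Tq2.phi_ι, Tq2.rel3]
        · simp [Tq2.phi_ι, smul_eq_mul, MulOpposite.smul_eq_mul_unop]
    obtain ⟨D, hD, ha⟩ := Tq2.exists_deriv K q _ hrel
    refine ⟨D, hD, ?_, ?_, ?_⟩
    · simpa using ha 0
    · simpa using ha 1
    · simpa using ha 2
  · have hrel : ∀ ⦃x y⦄, Tq2Rel K q x y →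
        Tq2.phi K q ![0, 0, Tq2.a K q 0] x = Tq2.phi K q ![0, 0, Tq2.a K q 0] y := by
      intro x y h
      induction h with
      | r1 =>
        ext
        · simp [Tq2.phi_ι, Tq2.rel1]
        · simp [Tq2.phi_ι, smul_eq_mul, MulOpposite.smul_eq_mul_unop, Tq2.rel2]
      | r2 =>
        ext
        · simp [Tq2.phi_ι, Tq2.rel2]
        · simp [Tq2.phi_ι, smul_eq_mul, MulOpposite.smul_eq_mul_unop]
      | r3 =>
        ext
        · simp [Tq2.phi_ι, Tq2.rel3]
        · simp [Tq2.phi_ι, smul_eq_mul, MulOpposite.smul_eq_mul_unop]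
    obtain ⟨D, hD, ha⟩ := Tq2.exists_deriv K q _ hrel
    refine ⟨D, hD, ?_, ?_, ?_⟩
    · simpa using ha 2
    · simpa using ha 0
    · simpa using ha 1
end

section
/- Let K be a field. Define a binary operation ∗ on the set G = (K*)³ × ℤ³ by (λ12, λ11, λ22, j1, k1, l1) ∗ (μ12, μ11, μ22, j2, k2, l2) = (λ12·μ12·λ11^{k2}·λ22^{l2}, λ11·μ11·(λ11/λ22)^{j2}, λ22·μ22·(λ11/λ22)^{j2}, j1+j2, k1+k2+j1(k2+l2), l1+l2−j1(k2+l2)). Then (G, ∗) is a group with identity (1,1,1,0,0,0), and the inverse of (λ12, λ11, λ22, j, k, l) is (λ12^{−1}·λ11^{k−j(k+l)}·λ22^{l+j(k+l)}, λ11^{−1}·(λ11/λ22)^{j}, λ22^{−1}·(λ11/λ22)^{j}, −j, j(k+l)−k, −j(k+l)−l). -/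
/-- The underlying set `(K*)³ × ℤ³`. -/
abbrev GSet (K : Type*) [Field K] := (Kˣ × Kˣ × Kˣ) × (ℤ × ℤ × ℤ)

/-- The operation `∗` on `(K*)³ × ℤ³`. -/
def GOp {K : Type*} [Field K] : GSet K → GSet K → GSet K :=
  fun ⟨⟨l12, l11, l22⟩, ⟨j1, k1, l1⟩⟩ ⟨⟨m12, m11, m22⟩, ⟨j2, k2, l2⟩⟩ =>
    ⟨⟨l12 * m12 * l11 ^ k2 * l22 ^ l2,
      l11 * m11 * (l11 * l22⁻¹) ^ j2,
      l22 * m22 * (l11 * l22⁻¹) ^ j2⟩,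
     ⟨j1 + j2, k1 + k2 + j1 * (k2 + l2), l1 + l2 - j1 * (k2 + l2)⟩⟩

/-- The proposed inverse map. -/
def GInv {K : Type*} [Field K] : GSet K → GSet K :=
  fun ⟨⟨l12, l11, l22⟩, ⟨j, k, l⟩⟩ =>
    ⟨⟨l12⁻¹ * l11 ^ (k - j * (k + l)) * l22 ^ (l + j * (k + l)),
      l11⁻¹ * (l11 * l22⁻¹) ^ j,
      l22⁻¹ * (l11 * l22⁻¹) ^ j⟩,
     ⟨-j, j * (k + l) - k, -(j * (k + l)) - l⟩⟩

/-- The identity element `(1,1,1,0,0,0)`. -/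
def GOne (K : Type*) [Field K] : GSet K := ⟨⟨1, 1, 1⟩, ⟨0, 0, 0⟩⟩

theorem stmt_15 (K : Type*) [Field K] :
    (∀ a b c : GSet K, GOp (GOp a b) c = GOp a (GOp b c)) ∧
    (∀ a : GSet K, GOp (GOne K) a = a ∧ GOp a (GOne K) = a) ∧
    (∀ a : GSet K, GOp (GInv a) a = GOne K ∧ GOp a (GInv a) = GOne K) := by
  have key : ∀ x y : Kˣ, Additive.ofMul x = Additive.ofMul y → x = y :=
    fun _ _ h => Additive.ofMul.injective h
  refine ⟨?_, ?_, ?_⟩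
  · rintro ⟨⟨a1,a2,a3⟩,⟨j1,k1,l1⟩⟩ ⟨⟨b1,b2,b3⟩,⟨j2,k2,l2⟩⟩ ⟨⟨c1,c2,c3⟩,⟨j3,k3,l3⟩⟩
    simp only [GOp, Prod.mk.injEq]
    refine ⟨⟨?_, ?_, ?_⟩, by ring, by ring, by ring⟩ <;>
      (apply key; simp only [ofMul_mul, ofMul_zpow, ofMul_inv]; module)
  · rintro ⟨⟨a1,a2,a3⟩,⟨j,k,l⟩⟩
    constructor <;> simp [GOp, GOne]
  · rintro ⟨⟨a1,a2,a3⟩,⟨j,k,l⟩⟩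
    constructor <;>
    · simp only [GOp, GInv, GOne, Prod.mk.injEq]
      refine ⟨⟨?_, ?_, ?_⟩, by ring, by ring, by ring⟩ <;>
        (apply key; simp only [ofMul_mul, ofMul_zpow, ofMul_inv, ofMul_one]; module)
end

section
/- Let T = T_q(2) be the quotient of K⟨a11, a12, a22⟩ by the relations a22·a12 = q·a12·a22, a11·a12 = q·a12·a11, a11·a22 = a22·a11. For each λ ∈ K* and each invertible matrix A = (μ_{ij}) ∈ GL₂(K), there is an algebra automorphism φ_{λ,A} of T with φ_{λ,A}(a12) = λ·a12, φ_{λ,A}(a11) = μ11·a11 + μ21·a22, φ_{λ,A}(a22) = μ12·a11 + μ22·a22, and the map (λ, A) ↦ φ_{λ,A} is an injective group homomorphism from K* × GL₂(K) into Aut(T). -/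
/-!
A `K`-algebra map out of `T_q(2)` is determined by images of the generators satisfying the three
relations. The substitution `a12 ↦ λ a12`, `(a11, a22) ↦ (a11, a22) A` respects them because `a12`
`q`-commutes with every element of the commutative span of `a11, a22`; substitutions compose like
products in `K × M₂(K)`, so units go to automorphisms. Injectivity comes from the algebra map
`T_q(2) → K³` sending `a_i` to the `i`-th coordinate vector: it kills products of distinct
generators, so it respects the relations, and it reads off the coefficients of `λ` and `A`.
-/

namespace Tq2

variable {K : Type*} [Field K] {q : K}

theorem a_two_mul_a_one : a K q 2 * a K q 1 = q • (a K q 1 * a K q 2) := by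
  simpa [a] using RingQuot.mkAlgHom_rel K (Tq2Rel.r1 (K := K) (q := q))

theorem a_zero_mul_a_one : a K q 0 * a K q 1 = q • (a K q 1 * a K q 0) := by
  simpa [a] using RingQuot.mkAlgHom_rel K (Tq2Rel.r2 (K := K) (q := q))

theorem commute_a_zero_a_two : Commute (a K q 0) (a K q 2) :=
  show a K q 0 * a K q 2 = a K q 2 * a K q 0 by
    simpa [a] using RingQuot.mkAlgHom_rel K (Tq2Rel.r3 (K := K) (q := q))

section lift

variable {B : Type*} [Semiring B] [Algebra K B]

def lift (x : Fin 3 → B) (h21 : x 2 * x 1 = q • (x 1 * x 2))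
    (h01 : x 0 * x 1 = q • (x 1 * x 0)) (h02 : Commute (x 0) (x 2)) : Tq2 K q →ₐ[K] B :=
  RingQuot.liftAlgHom K ⟨FreeAlgebra.lift K x, fun _ _ h => by
    cases h <;> simp [h21, h01, h02.eq]⟩

@[simp]
theorem lift_a (x : Fin 3 → B) (h21 : x 2 * x 1 = q • (x 1 * x 2))
    (h01 : x 0 * x 1 = q • (x 1 * x 0)) (h02 : Commute (x 0) (x 2)) (i : Fin 3) :
    lift x h21 h01 h02 (a K q i) = x i := by
  simp [lift, a, RingQuot.liftAlgHom_mkAlgHom_apply]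

theorem algHom_ext {f g : Tq2 K q →ₐ[K] B} (h : ∀ i, f (a K q i) = g (a K q i)) : f = g :=
  RingQuot.ringQuot_ext' K f g (FreeAlgebra.hom_ext (funext h))

end lift

def coordHom : Tq2 K q →ₐ[K] (Fin 3 → K) :=
  lift (fun i => Pi.single i 1) (by simp [← Pi.single_mul_left]) (by simp [← Pi.single_mul_left])
    (by simp [Commute, SemiconjBy, ← Pi.single_mul_left])

@[simp]
theorem coordHom_a (i : Fin 3) : coordHom (a K q i) = Pi.single i 1 := lift_a ..

theorem smul_a_zero_add_smul_a_two_mul_a_one (α β : K) :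
    (α • a K q 0 + β • a K q 2) * a K q 1 = q • (a K q 1 * (α • a K q 0 + β • a K q 2)) := by
  simp only [add_mul, mul_add, smul_mul_assoc, mul_smul_comm, a_zero_mul_a_one, a_two_mul_a_one,
    smul_add, smul_comm q]

theorem commute_smul_a_zero_add_smul_a_two (α β γ δ : K) :
    Commute (α • a K q 0 + β • a K q 2) (γ • a K q 0 + δ • a K q 2) := by
  have h := commute_a_zero_a_two (K := K) (q := q)
  refine Commute.add_left (Commute.add_right ?_ ?_) (Commute.add_right ?_ ?_)
  · exact ((Commute.refl _).smul_left _).smul_right _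
  · exact (h.smul_left _).smul_right _
  · exact (h.symm.smul_left _).smul_right _
  · exact ((Commute.refl _).smul_left _).smul_right _

def substImage (lam : K) (A : Matrix (Fin 2) (Fin 2) K) : Fin 3 → Tq2 K q :=
  ![A 0 0 • a K q 0 + A 1 0 • a K q 2, lam • a K q 1, A 0 1 • a K q 0 + A 1 1 • a K q 2]

def subst (lam : K) (A : Matrix (Fin 2) (Fin 2) K) : Tq2 K q →ₐ[K] Tq2 K q :=
  lift (substImage lam A)
    (by simp only [substImage, Matrix.cons_val]
        rw [mul_smul_comm, smul_a_zero_add_smul_a_two_mul_a_one, smul_mul_assoc, smul_comm])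
    (by simp only [substImage, Matrix.cons_val]
        rw [mul_smul_comm, smul_a_zero_add_smul_a_two_mul_a_one, smul_mul_assoc, smul_comm])
    (commute_smul_a_zero_add_smul_a_two ..)

@[simp]
theorem subst_a (lam : K) (A : Matrix (Fin 2) (Fin 2) K) (i : Fin 3) :
    subst lam A (a K q i) = substImage lam A i := lift_a ..

def substMonoidHom : K × Matrix (Fin 2) (Fin 2) K →* (Tq2 K q →ₐ[K] Tq2 K q) where
  toFun p := subst p.1 p.2
  map_one' := by
    refine algHom_ext fun i => ?_
    fin_cases i <;> simp [substImage]
  map_mul' p r := by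
    refine algHom_ext fun i => ?_
    fin_cases i <;> simp [substImage, Matrix.mul_apply, Fin.sum_univ_two] <;> module

theorem subst_injective₂ : Function.Injective2 (subst (K := K) (q := q)) := by
  intro l m A B h
  have key : ∀ i j, coordHom (subst l A (a K q i)) j = coordHom (subst m B (a K q i)) j :=
    fun i j => by rw [h]
  refine ⟨by simpa [substImage] using key 1 1, Matrix.ext fun i j => ?_⟩
  fin_cases i <;> fin_cases j
  · simpa [substImage] using key 0 0
  · simpa [substImage] using key 2 0
  · simpa [substImage] using key 0 2
  · simpa [substImage] using key 2 2

def autMonoidHom : Kˣ × GL (Fin 2) K →* (Tq2 K q ≃ₐ[K] Tq2 K q) :=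
  (AlgEquiv.algHomUnitsEquiv K _).toMonoidHom.comp <| MonoidHom.toHomUnits <|
    substMonoidHom.comp ((Units.coeHom K).prodMap (Units.coeHom (Matrix (Fin 2) (Fin 2) K)))

theorem autMonoidHom_apply (p : Kˣ × GL (Fin 2) K) (x : Tq2 K q) :
    autMonoidHom p x = subst (p.1 : K) (p.2 : Matrix (Fin 2) (Fin 2) K) x := rfl

theorem autMonoidHom_injective : Function.Injective (autMonoidHom (K := K) (q := q)) := by
  intro p r h
  have h' : subst (q := q) (p.1 : K) (p.2 : Matrix (Fin 2) (Fin 2) K) =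
      subst (r.1 : K) (r.2 : Matrix (Fin 2) (Fin 2) K) :=
    AlgHom.ext fun x => by simpa only [autMonoidHom_apply] using DFunLike.congr_fun h x
  obtain ⟨h1, h2⟩ := subst_injective₂ h'
  exact Prod.ext (Units.ext h1) (Units.ext h2)

end Tq2

theorem stmt_17_general (K : Type*) [Field K] (q : K) :
    ∃ Φ : Kˣ × GL (Fin 2) K →* (Tq2 K q ≃ₐ[K] Tq2 K q),
      Function.Injective Φ ∧
      ∀ (lam : Kˣ) (A : GL (Fin 2) K),
        Φ (lam, A) (Tq2.a K q 1) = (lam : K) • Tq2.a K q 1 ∧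
        Φ (lam, A) (Tq2.a K q 0) =
          ((A : Matrix (Fin 2) (Fin 2) K) 0 0) • Tq2.a K q 0
            + ((A : Matrix (Fin 2) (Fin 2) K) 1 0) • Tq2.a K q 2 ∧
        Φ (lam, A) (Tq2.a K q 2) =
          ((A : Matrix (Fin 2) (Fin 2) K) 0 1) • Tq2.a K q 0
            + ((A : Matrix (Fin 2) (Fin 2) K) 1 1) • Tq2.a K q 2 :=
  ⟨Tq2.autMonoidHom, Tq2.autMonoidHom_injective, fun _ _ =>
    ⟨Tq2.subst_a .., Tq2.subst_a .., Tq2.subst_a ..⟩⟩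

theorem stmt_17 (K : Type*) [Field K] (q : K) (hq : q ≠ 0) :
    ∃ Φ : Kˣ × GL (Fin 2) K →* (Tq2 K q ≃ₐ[K] Tq2 K q),
      Function.Injective Φ ∧
      ∀ (lam : Kˣ) (A : GL (Fin 2) K),
        Φ (lam, A) (Tq2.a K q 1) = (lam : K) • Tq2.a K q 1 ∧
        Φ (lam, A) (Tq2.a K q 0) =
          ((A : Matrix (Fin 2) (Fin 2) K) 0 0) • Tq2.a K q 0
            + ((A : Matrix (Fin 2) (Fin 2) K) 1 0) • Tq2.a K q 2 ∧
        Φ (lam, A) (Tq2.a K q 2) =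
          ((A : Matrix (Fin 2) (Fin 2) K) 0 1) • Tq2.a K q 0
            + ((A : Matrix (Fin 2) (Fin 2) K) 1 1) • Tq2.a K q 2 :=
  stmt_17_general K q
end
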